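/- Let F be a field and θ : Fˣ → F a function with θ(1) = 0. Let n ≥ 1, 1 ≤ k ≤ n, a₁, …, aₙ, z₁, z₂, ħ ∈ Fˣ, and assume θ((z₁/z₂)·ħ^{k−2}) ≠ 0. Define S'_k(t) := (∏_{i=1}^{k−1} θ((aᵢ/t)·ħ²)) · θ((t/a_k)·(z₁/z₂)·ħ^{k−3}) / θ((z₁/z₂)·ħ^{k−2}) · (∏_{i=k+1}^{n} θ((t/aᵢ)·ħ⁻¹)) for t ∈ Fˣ. Then: (1) S'_k(a_l·ħ) = 0 for every l with k < l ≤ n; and (2) S'_k(a_k·ħ) = (∏_{i=1}^{k−1} θ((aᵢ/a_k)·ħ)) · (∏_{i=k+1}^{n} θ(a_k/aᵢ)); in particular the diagonal restriction S'_k(a_k·ħ) coincides with the diagonal restriction S_k(a_k·ħ⁻¹) of the separated presentation, where S_k(t) := (∏_{i=1}^{k−1} θ(aᵢ/t)) · θ((t/a_k)·(z₁/z₂)·ħ^{k−1}) / θ((z₁/z₂)·ħ^{k−2}) · (∏_{i=k+1}^{n} θ((t/aᵢ)·ħ)). -/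

import Mathlib

/-- The explicit formula for the elliptic stable envelope `Stab_C(f_k)` of
`T*P^{n-1}` in its separated bow-variety presentation (standard chamber). -/
def Ssep {F : Type*} [Field F] (θ : Fˣ → F) (n k : ℕ) (a : ℕ → Fˣ) (z₁ z₂ hbar t : Fˣ) : F :=
  (∏ i ∈ Finset.Ico 1 k, θ (a i / t)) *
    θ (t / a k * (z₁ / z₂) * hbar ^ ((k : ℤ) - 1)) / θ (z₁ / z₂ * hbar ^ ((k : ℤ) - 2)) *
    ∏ i ∈ Finset.Ioc k n, θ (t / a i * hbar)

/-- The explicit formula for the elliptic stable envelope `Stab_C(f'_k)` of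
`T*P^{n-1}` in its co-separated bow-variety presentation (standard chamber). -/
def Scosep {F : Type*} [Field F] (θ : Fˣ → F) (n k : ℕ) (a : ℕ → Fˣ) (z₁ z₂ hbar t : Fˣ) : F :=
  (∏ i ∈ Finset.Ico 1 k, θ (a i / t * hbar ^ 2)) *
    θ (t / a k * (z₁ / z₂) * hbar ^ ((k : ℤ) - 3)) / θ (z₁ / z₂ * hbar ^ ((k : ℤ) - 2)) *
    ∏ i ∈ Finset.Ioc k n, θ (t / a i * hbar⁻¹)

/-! The co-separated formula is the separated one shifted by `t ↦ t·ħ⁻²`, which matches the fixed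
points `f'_l ↔ a_l·ħ` with `f_l ↔ a_l·ħ⁻¹`. So everything reduces to the separated formula: at
`t = a_l·ħ⁻¹` with `k < l` its last product contains the factor `θ 1 = 0`, and at `t = a_k·ħ⁻¹`
the middle factor becomes the denominator and cancels. -/

section CommGroup

variable {G : Type*} [CommGroup G]

theorem div_div_sq_eq_div_mul_sq (x t h : G) : x / (t / h ^ 2) = x / t * h ^ 2 := by
  rw [div_div_eq_mul_div, mul_div_right_comm]

theorem div_sq_div_mul_zpow_sub_one (x t h z : G) (k : ℤ) :
    t / h ^ 2 / x * z * h ^ (k - 1) = t / x * z * h ^ (k - 3) := by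
  rw [show k - 1 = (k - 3) + 2 by ring, zpow_add, zpow_ofNat]
  simp [div_eq_mul_inv, mul_comm, mul_left_comm, mul_assoc]

theorem div_sq_div_mul_self (x t h : G) : t / h ^ 2 / x * h = t / x * h⁻¹ := by
  rw [div_right_comm, pow_two, div_mul_eq_div_div, div_mul_cancel, div_eq_mul_inv]

theorem div_mul_inv_div_mul_zpow_sub_one (x h z : G) (k : ℤ) :
    x * h⁻¹ / x * z * h ^ (k - 1) = z * h ^ (k - 2) := by
  rw [show k - 1 = (k - 2) + 1 by ring, zpow_add_one, mul_div_cancel_left, mul_comm (h ^ _) h,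
    mul_comm h⁻¹ z, mul_assoc, inv_mul_cancel_left]

end CommGroup

section StableEnvelope

variable {F : Type*} [Field F] (θ : Fˣ → F) (n k : ℕ) (a : ℕ → Fˣ) (z₁ z₂ hbar : Fˣ)

theorem Scosep_eq_Ssep_div_sq (t : Fˣ) :
    Scosep θ n k a z₁ z₂ hbar t = Ssep θ n k a z₁ z₂ hbar (t / hbar ^ 2) := by
  simp only [Scosep, Ssep, div_div_sq_eq_div_mul_sq, div_sq_div_mul_zpow_sub_one,
    div_sq_div_mul_self]

theorem Scosep_mul_eq_Ssep_mul_inv (x : Fˣ) :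
    Scosep θ n k a z₁ z₂ hbar (x * hbar) = Ssep θ n k a z₁ z₂ hbar (x * hbar⁻¹) := by
  rw [Scosep_eq_Ssep_div_sq, pow_two, div_mul_eq_div_div, mul_div_cancel_right, div_eq_mul_inv]

theorem Ssep_mul_inv_eq_zero_of_lt (hθ : θ 1 = 0) {l : ℕ} (hkl : k < l) (hln : l ≤ n) :
    Ssep θ n k a z₁ z₂ hbar (a l * hbar⁻¹) = 0 := by
  have hfactor : θ (a l * hbar⁻¹ / a l * hbar) = 0 := by
    rwa [mul_div_right_comm, div_self', one_mul, inv_mul_cancel]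
  rw [Ssep, Finset.prod_eq_zero (Finset.mem_Ioc.mpr ⟨hkl, hln⟩) hfactor, mul_zero]

theorem Ssep_mul_inv_self (hden : θ (z₁ / z₂ * hbar ^ ((k : ℤ) - 2)) ≠ 0) :
    Ssep θ n k a z₁ z₂ hbar (a k * hbar⁻¹)
      = (∏ i ∈ Finset.Ico 1 k, θ (a i / a k * hbar)) * ∏ i ∈ Finset.Ioc k n, θ (a k / a i) := by
  have hleft (i : ℕ) : a i / (a k * hbar⁻¹) = a i / a k * hbar := by
    rw [div_mul_eq_div_div, div_inv_eq_mul]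
  have hright (i : ℕ) : a k * hbar⁻¹ / a i * hbar = a k / a i := by
    rw [mul_div_right_comm, inv_mul_cancel_right]
  simp only [Ssep, hleft, hright, div_mul_inv_div_mul_zpow_sub_one]
  rw [mul_div_assoc, div_self hden, mul_one]

end StableEnvelope

theorem stmt14_general {F : Type*} [Field F] (θ : Fˣ → F) (hθ : θ 1 = 0)
    (n k : ℕ)
    (a : ℕ → Fˣ) (z₁ z₂ hbar : Fˣ)
    (hden : θ (z₁ / z₂ * hbar ^ ((k : ℤ) - 2)) ≠ 0) :
    (∀ l, k < l → l ≤ n → Scosep θ n k a z₁ z₂ hbar (a l * hbar) = 0)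
    ∧ Scosep θ n k a z₁ z₂ hbar (a k * hbar)
        = (∏ i ∈ Finset.Ico 1 k, θ (a i / a k * hbar)) * ∏ i ∈ Finset.Ioc k n, θ (a k / a i)
    ∧ Scosep θ n k a z₁ z₂ hbar (a k * hbar) = Ssep θ n k a z₁ z₂ hbar (a k * hbar⁻¹) := by
  have hsame := Scosep_mul_eq_Ssep_mul_inv θ n k a z₁ z₂ hbar (a k)
  refine ⟨fun l hkl hln => ?_, hsame.trans (Ssep_mul_inv_self θ n k a z₁ z₂ hbar hden), hsame⟩
  rw [Scosep_mul_eq_Ssep_mul_inv]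
  exact Ssep_mul_inv_eq_zero_of_lt θ n k a z₁ z₂ hbar hθ hkl hln

/-- Triangularity and diagonal restriction of the stable envelope formulas for
`T*P^{n-1}` (co-separated presentation): restriction to `f'_l` is `t ↦ a_l·hbar`; the
diagonal restriction agrees with that of the separated presentation. -/
theorem stmt14 {F : Type*} [Field F] (θ : Fˣ → F) (hθ : θ 1 = 0)
    (n k : ℕ) (hn : 1 ≤ n) (hk1 : 1 ≤ k) (hkn : k ≤ n)
    (a : ℕ → Fˣ) (z₁ z₂ hbar : Fˣ)
    (hden : θ (z₁ / z₂ * hbar ^ ((k : ℤ) - 2)) ≠ 0) :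
    (∀ l, k < l → l ≤ n → Scosep θ n k a z₁ z₂ hbar (a l * hbar) = 0)
    ∧ Scosep θ n k a z₁ z₂ hbar (a k * hbar)
        = (∏ i ∈ Finset.Ico 1 k, θ (a i / a k * hbar)) * ∏ i ∈ Finset.Ioc k n, θ (a k / a i)
    ∧ Scosep θ n k a z₁ z₂ hbar (a k * hbar) = Ssep θ n k a z₁ z₂ hbar (a k * hbar⁻¹) :=
  stmt14_general θ hθ n k a z₁ z₂ hbar hden
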